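/- (Friedman bound, binary case) If C is an orthogonal array OA(N,n,2,t) with 1 ≤ t ≤ n, then N ≥ 2^n (1 - n/(2(t+1))). -/

import Mathlib

/-!
Expand the multiplicity function `f` in the Walsh basis `χ_S(x) = ∏_{i ∈ S} (-1)^{x_i}`, with
coefficients `F(S) = ∑_x f(x) χ_S(x)`. Strength `t` forces `F(∅) = N` and `F(S) = 0` for
`1 ≤ |S| ≤ t`, so in `T = ∑_S (2t + 2 - 2|S|) F(S)²` only nonpositive terms survive besides
`S = ∅`, and `T ≤ (2t + 2) N²`. On the other hand `n - 2|S| = ∑_i ε_i(S)` with `ε_i(S) = ∓1`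
according as `i ∈ S` or not, and each `∑_S ε_i(S) F(S)²` equals `∑_{x,y} f(x) f(y) P_i(x, y)` where
`P_i` is a product of factors `1 ± 1 ≥ 0`. Together with Parseval this gives
`T ≥ (2t + 2 - n) 2ⁿ ∑_x f(x)² ≥ (2t + 2 - n) 2ⁿ N`, the last step because multiplicities are
integers.
-/

open Finset

section

variable {ι : Type*} [Fintype ι] [DecidableEq ι]

def walshChar (S : Finset ι) (x : ι → Fin 2) : ℤ :=
  ∏ i ∈ S, (-1) ^ (x i : ℕ)

def walshCoeff (f : (ι → Fin 2) → ℤ) (S : Finset ι) : ℤ :=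
  ∑ x, f x * walshChar S x

def IsOrthogonalArray (t N : ℕ) (f : (ι → Fin 2) → ℕ) : Prop :=
  ∀ s : Finset ι, s.card = t → ∀ g : ι → Fin 2,
    (∑ x ∈ univ.filter (fun x : ι → Fin 2 => ∀ i ∈ s, x i = g i), f x) * 2 ^ t = N

lemma walshChar_eq_prod_univ (S : Finset ι) (x : ι → Fin 2) :
    walshChar S x = ∏ i, if i ∈ S then (-1) ^ (x i : ℕ) else 1 := by
  rw [walshChar, prod_ite_mem, univ_inter]

lemma sum_walshChar_eq_zero {S : Finset ι} (hS : S.Nonempty) : ∑ x, walshChar S x = 0 := by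
  obtain ⟨i, hi⟩ := hS
  simp only [walshChar_eq_prod_univ]
  rw [← Fintype.prod_sum fun i (b : Fin 2) => if i ∈ S then (-1 : ℤ) ^ (b : ℕ) else 1]
  exact prod_eq_zero (mem_univ i) (by simp [hi, Fin.sum_univ_two])

lemma card_filter_forall_mem_eq {α : Type*} [Fintype α] [DecidableEq α] (s : Finset ι)
    (x : ι → α) :
    #{g : ι → α | ∀ i ∈ s, x i = g i} = Fintype.card α ^ (Fintype.card ι - #s) := by
  have : ({g | ∀ i ∈ s, x i = g i} : Finset (ι → α)) =
      Fintype.piFinset fun i => if i ∈ s then {x i} else univ := by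
    ext g
    simp only [mem_filter, mem_univ, true_and, Fintype.mem_piFinset]
    refine forall_congr' fun i => ?_
    split_ifs with hi <;> simp [hi, eq_comm]
  rw [this, Fintype.card_piFinset]
  simp [apply_ite card, prod_ite, ← card_compl, filter_notMem_eq_sdiff, compl_eq_univ_sdiff]

lemma sum_filter_forall_mem_eq_walshChar {S s : Finset ι} (hSs : S ⊆ s) (x : ι → Fin 2) :
    ∑ g with ∀ i ∈ s, x i = g i, walshChar S g = 2 ^ (Fintype.card ι - #s) * walshChar S x := by
  have hconst : ∀ g ∈ ({g | ∀ i ∈ s, x i = g i} : Finset (ι → Fin 2)),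
      walshChar S g = walshChar S x := fun g hg =>
    prod_congr rfl fun i hi => by rw [((mem_filter.mp hg).2 i (hSs hi))]
  rw [sum_congr rfl hconst, sum_const, card_filter_forall_mem_eq, Fintype.card_fin, nsmul_eq_mul,
    Nat.cast_pow, Nat.cast_ofNat]

lemma IsOrthogonalArray.two_pow_mul_walshCoeff {t N : ℕ} {f : (ι → Fin 2) → ℕ}
    (h : IsOrthogonalArray t N f) (htn : t ≤ Fintype.card ι) {S : Finset ι} (hSt : #S ≤ t) :
    2 ^ Fintype.card ι * walshCoeff (fun x => (f x : ℤ)) S = N * ∑ g, walshChar S g := by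
  obtain ⟨s, hSs, hs⟩ := exists_superset_card_eq hSt htn
  calc 2 ^ Fintype.card ι * walshCoeff (fun x => (f x : ℤ)) S
      = 2 ^ t * ∑ x, f x * (2 ^ (Fintype.card ι - t) * walshChar S x) := by
        rw [walshCoeff, ← pow_mul_pow_sub 2 htn, mul_assoc]
        congr 1
        rw [mul_sum]
        exact sum_congr rfl fun x _ => by ring
    _ = 2 ^ t * ∑ x, ∑ g, if ∀ i ∈ s, x i = g i then (f x : ℤ) * walshChar S g else 0 := by
        congr 1
        simp_rw [← hs, ← sum_filter_forall_mem_eq_walshChar hSs, mul_sum, sum_filter]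
    _ = ∑ g, (((∑ x with ∀ i ∈ s, x i = g i, f x) * 2 ^ t : ℕ) : ℤ) * walshChar S g := by
        rw [sum_comm, mul_sum]
        refine sum_congr rfl fun g _ => ?_
        rw [← sum_filter, ← sum_mul]
        push_cast; ring
    _ = N * ∑ g, walshChar S g := by simp_rw [h s hs, mul_sum]

lemma IsOrthogonalArray.walshCoeff_empty {t N : ℕ} {f : (ι → Fin 2) → ℕ}
    (h : IsOrthogonalArray t N f) (htn : t ≤ Fintype.card ι) :
    walshCoeff (fun x => (f x : ℤ)) ∅ = N := by
  have h2 := h.two_pow_mul_walshCoeff htn (S := ∅) (by simp)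
  have hsum : ∑ g : ι → Fin 2, walshChar ∅ g = 2 ^ Fintype.card ι := by simp [walshChar]
  rw [hsum, mul_comm (N : ℤ)] at h2
  exact mul_left_cancel₀ (by positivity) h2

lemma IsOrthogonalArray.walshCoeff_eq_zero {t N : ℕ} {f : (ι → Fin 2) → ℕ}
    (h : IsOrthogonalArray t N f) (htn : t ≤ Fintype.card ι) {S : Finset ι} (hS : S.Nonempty)
    (hSt : #S ≤ t) : walshCoeff (fun x => (f x : ℤ)) S = 0 := by
  have := h.two_pow_mul_walshCoeff htn hSt
  rw [sum_walshChar_eq_zero hS, mul_zero] at this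
  exact (mul_eq_zero.mp this).resolve_left (by positivity)

omit [DecidableEq ι] in
lemma sum_prod_mul_walshChar_mul_walshChar (a : ι → ℤ) (x y : ι → Fin 2) :
    ∑ S, (∏ i ∈ S, a i) * (walshChar S x * walshChar S y) =
      ∏ i, (1 + a i * ((-1) ^ (x i : ℕ) * (-1) ^ (y i : ℕ))) := by
  rw [prod_one_add, powerset_univ]
  refine sum_congr rfl fun S _ => ?_
  rw [walshChar, walshChar, ← prod_mul_distrib, ← prod_mul_distrib]

lemma sum_prod_mul_walshCoeff_sq (a : ι → ℤ) (f : (ι → Fin 2) → ℤ) :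
    ∑ S, (∏ i ∈ S, a i) * walshCoeff f S ^ 2 =
      ∑ x, ∑ y, f x * f y * ∏ i, (1 + a i * ((-1) ^ (x i : ℕ) * (-1) ^ (y i : ℕ))) := by
  simp_rw [← sum_prod_mul_walshChar_mul_walshChar, walshCoeff, sq, sum_mul_sum, mul_sum]
  rw [sum_comm]
  refine sum_congr rfl fun x _ => ?_
  rw [sum_comm]
  exact sum_congr rfl fun y _ => sum_congr rfl fun S _ => by ring

lemma sum_walshCoeff_sq (f : (ι → Fin 2) → ℤ) :
    ∑ S, walshCoeff f S ^ 2 = 2 ^ Fintype.card ι * ∑ x, f x ^ 2 := by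
  have hfactor (a b : Fin 2) : 1 + (-1 : ℤ) ^ (a : ℕ) * (-1) ^ (b : ℕ) =
      if a = b then 2 else 0 := by
    fin_cases a <;> fin_cases b <;> rfl
  have := sum_prod_mul_walshCoeff_sq (fun _ => 1) f
  simp only [prod_const_one, one_mul] at this
  simp_rw [this, hfactor, prod_ite_zero, mem_univ, true_implies, ← funext_iff, prod_const,
    card_univ, mul_ite, mul_zero, sum_ite_eq, mem_univ, if_true, mul_sum]
  exact sum_congr rfl fun x _ => by ring

lemma sum_prod_mul_walshCoeff_sq_nonneg {a : ι → ℤ} (ha : ∀ i, |a i| ≤ 1)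
    {f : (ι → Fin 2) → ℤ} (hf : ∀ x, 0 ≤ f x) : 0 ≤ ∑ S, (∏ i ∈ S, a i) * walshCoeff f S ^ 2 := by
  rw [sum_prod_mul_walshCoeff_sq]
  refine sum_nonneg fun x _ => sum_nonneg fun y _ =>
    mul_nonneg (mul_nonneg (hf x) (hf y)) (prod_nonneg fun i _ => ?_)
  have habs : |a i * ((-1) ^ (x i : ℕ) * (-1) ^ (y i : ℕ))| = |a i| := by simp [abs_mul]
  linarith [neg_abs_le (a i * ((-1) ^ (x i : ℕ) * (-1) ^ (y i : ℕ))), ha i]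

lemma sum_prod_ite_eq_neg_one (S : Finset ι) :
    ∑ i, ∏ j ∈ S, (if j = i then -1 else 1 : ℤ) = Fintype.card ι - 2 * #S := by
  simp only [prod_ite_eq', sum_ite, filter_mem_eq_of_subset (subset_univ S), sum_neg_distrib,
    sum_const, Int.nsmul_eq_mul, mul_one, filter_notMem_eq_sdiff, card_univ_sdiff,
    Nat.cast_sub (card_le_univ S)]
  ring

lemma sum_card_sub_two_mul_card_mul_walshCoeff_sq_nonneg {f : (ι → Fin 2) → ℤ}
    (hf : ∀ x, 0 ≤ f x) : 0 ≤ ∑ S, (Fintype.card ι - 2 * #S : ℤ) * walshCoeff f S ^ 2 := by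
  simp_rw [← sum_prod_ite_eq_neg_one, sum_mul]
  rw [sum_comm]
  exact sum_nonneg fun i _ =>
    sum_prod_mul_walshCoeff_sq_nonneg (fun j => by split_ifs <;> simp) hf

lemma mul_sum_sq_le_sum_mul_walshCoeff_sq {f : (ι → Fin 2) → ℤ} (hf : ∀ x, 0 ≤ f x) (c : ℤ) :
    (c - Fintype.card ι) * (2 ^ Fintype.card ι * ∑ x, f x ^ 2) ≤
      ∑ S, (c - 2 * #S) * walshCoeff f S ^ 2 := by
  have hsplit : ∑ S, (c - 2 * #S) * walshCoeff f S ^ 2 =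
      (c - Fintype.card ι) * ∑ S, walshCoeff f S ^ 2 +
        ∑ S, (Fintype.card ι - 2 * #S : ℤ) * walshCoeff f S ^ 2 := by
    rw [mul_sum, ← sum_add_distrib]
    exact sum_congr rfl fun S _ => by ring
  rw [hsplit, sum_walshCoeff_sq]
  linarith [sum_card_sub_two_mul_card_mul_walshCoeff_sq_nonneg hf]

lemma IsOrthogonalArray.sum_mul_walshCoeff_sq_le {t N : ℕ} {f : (ι → Fin 2) → ℕ}
    (h : IsOrthogonalArray t N f) (htn : t ≤ Fintype.card ι) {c : ℤ} (hc : c ≤ 2 * (t + 1)) :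
    ∑ S, (c - 2 * #S) * walshCoeff (fun x => (f x : ℤ)) S ^ 2 ≤ c * N ^ 2 := by
  have hterm : ∀ S : Finset ι, (c - 2 * #S) * walshCoeff (fun x => (f x : ℤ)) S ^ 2 ≤
      if S = ∅ then c * N ^ 2 else 0 := by
    intro S
    split_ifs with hS
    · simp [hS, h.walshCoeff_empty htn]
    obtain hSt | hSt := le_or_gt #S t
    · simp [h.walshCoeff_eq_zero htn (nonempty_iff_ne_empty.mpr hS) hSt]
    · have : c - 2 * #S ≤ 0 := by omega
      exact mul_nonpos_of_nonpos_of_nonneg this (sq_nonneg _)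
  calc _ ≤ ∑ S : Finset ι, if S = ∅ then c * N ^ 2 else 0 := sum_le_sum fun S _ => hterm S
    _ = c * N ^ 2 := by simp

theorem IsOrthogonalArray.friedman_bound {t N : ℕ} {f : (ι → Fin 2) → ℕ}
    (h : IsOrthogonalArray t N f) (htn : t ≤ Fintype.card ι) (hN : 1 ≤ N) :
    (2 * (t + 1) - Fintype.card ι : ℤ) * 2 ^ Fintype.card ι ≤ 2 * (t + 1) * N := by
  have hN_le : (N : ℤ) ≤ ∑ x, (f x : ℤ) ^ 2 := by
    rw [← h.walshCoeff_empty htn, walshCoeff]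
    simp only [walshChar, prod_empty, mul_one]
    exact sum_le_sum fun x _ => by exact_mod_cast Nat.le_self_pow two_ne_zero (f x)
  have hquad := (mul_sum_sq_le_sum_mul_walshCoeff_sq (fun x => Int.natCast_nonneg (f x))
    (2 * (t + 1))).trans (h.sum_mul_walshCoeff_sq_le htn le_rfl)
  have hNpos : (0 : ℤ) < N := by exact_mod_cast hN
  obtain hc | hc := le_or_gt 0 (2 * (t + 1) - Fintype.card ι : ℤ)
  · refine le_of_mul_le_mul_right ?_ hNpos
    calc (2 * (t + 1) - Fintype.card ι : ℤ) * 2 ^ Fintype.card ι * N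
        ≤ (2 * (t + 1) - Fintype.card ι) * (2 ^ Fintype.card ι * ∑ x, (f x : ℤ) ^ 2) := by
          rw [mul_assoc]; gcongr
      _ ≤ 2 * (t + 1) * N ^ 2 := hquad
      _ = 2 * (t + 1) * N * N := by ring
  · have : (2 * (t + 1) - Fintype.card ι : ℤ) * 2 ^ Fintype.card ι < 0 :=
      mul_neg_of_neg_of_pos hc (by positivity)
    linarith [show (0 : ℤ) ≤ 2 * (t + 1) * N by positivity]

end

theorem stmt_2 (n t N : ℕ) (f : (Fin n → Fin 2) → ℕ)
    (htn : t ≤ n) (hN : 1 ≤ N)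
    (hOA : ∀ s : Finset (Fin n), s.card = t → ∀ g : Fin n → Fin 2,
      (∑ x ∈ Finset.univ.filter (fun x : Fin n → Fin 2 => ∀ i ∈ s, x i = g i), f x)
        * 2 ^ t = N) :
    (N : ℝ) ≥ 2 ^ n * (1 - n / (2 * (t + 1))) := by
  have hOA' : IsOrthogonalArray t N f := fun s hs g => by
    -- on `Fin n` the filter predicate is decided by `Nat.decidableForallFin` instead
    convert hOA s hs g
  have hbound := hOA'.friedman_bound (by simpa using htn) hN
  simp only [Fintype.card_fin] at hbound
  have hreal : ((2 * (t + 1) - n) * 2 ^ n : ℝ) ≤ 2 * (t + 1) * N := by exact_mod_cast hbound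
  have hrhs : (2 : ℝ) ^ n * (1 - n / (2 * (t + 1))) = (2 * (t + 1) - n) * 2 ^ n / (2 * (t + 1)) := by
    field_simp
  rw [ge_iff_le, hrhs, div_le_iff₀ (by positivity)]
  linarith
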